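/- Let u be a v-minimal word of a synchronizing automaton 𝒜 and i ∈ supp(u). If a word w u-represents an element g ∈ ℐ_i ∖ {0_i}, then rk(w) = Rnk(ℐ_i). -/

import Mathlib

open scoped BigOperators

set_option synthInstance.maxHeartbeats 1000000
set_option maxHeartbeats 1000000

noncomputable section

/-- Action of a word on a state: `q · u`. -/
def actW {Q A : Type*} (δ : Q → A → Q) (q : Q) (u : List A) : Q :=
  u.foldl δ q

/-- The image `Q · u` of the full state set under a word. -/
def imageSet {Q A : Type*} [Fintype Q] [DecidableEq Q] (δ : Q → A → Q) (u : List A) :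
    Finset Q :=
  Finset.image (fun q => actW δ q u) Finset.univ

/-- The rank `rk(u) = |Q · u|` of a word. -/
def wordRank {Q A : Type*} [Fintype Q] [DecidableEq Q] (δ : Q → A → Q) (u : List A) : ℕ :=
  (imageSet δ u).card

/-- A word is reset (synchronizing) if `|Q · u| = 1`. -/
def IsReset {Q A : Type*} [Fintype Q] [DecidableEq Q] (δ : Q → A → Q) (u : List A) : Prop :=
  wordRank δ u = 1

/-- The automaton is synchronizing if it admits a reset word. -/
def IsSynchronizing {Q A : Type*} [Fintype Q] [DecidableEq Q] (δ : Q → A → Q) : Prop :=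
  ∃ u : List A, IsReset δ u

/-- `Syn(𝒜)`, the set of reset words. -/
def SynWords {Q A : Type*} [Fintype Q] [DecidableEq Q] (δ : Q → A → Q) : Set (List A) :=
  {u | IsReset δ u}

/-- The hyperplane `w⊥ = {v ∈ ℂQ : ∑ q, v q = 0}`. -/
def Wperp (Q : Type*) [Fintype Q] : Submodule ℂ (Q → ℂ) :=
  LinearMap.ker (∑ q : Q, (LinearMap.proj q : (Q → ℂ) →ₗ[ℂ] ℂ))

theorem mem_Wperp {Q : Type*} [Fintype Q] (v : Q → ℂ) :
    v ∈ Wperp Q ↔ ∑ q : Q, v q = 0 := by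
  simp [Wperp, LinearMap.mem_ker, LinearMap.sum_apply]

/-- The (right) action of a word on row vectors `v ↦ v·π(u)`. -/
def piLin {Q A : Type*} [Fintype Q] [DecidableEq Q] (δ : Q → A → Q) (u : List A) :
    (Q → ℂ) →ₗ[ℂ] (Q → ℂ) where
  toFun v := fun p => ∑ q ∈ Finset.univ.filter (fun q => actW δ q u = p), v q
  map_add' := by
    intro a b; funext p; simp [Finset.sum_add_distrib]
  map_smul' := by
    intro c v; funext p; simp [Finset.mul_sum]

theorem piLin_mem {Q A : Type*} [Fintype Q] [DecidableEq Q] (δ : Q → A → Q) (u : List A) :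
    ∀ v ∈ Wperp Q, piLin δ u v ∈ Wperp Q := by
  intro v hv
  rw [mem_Wperp] at hv ⊢
  have h := Finset.sum_fiberwise (Finset.univ : Finset Q) (fun q => actW δ q u) v
  calc ∑ p : Q, piLin δ u v p
      = ∑ p : Q, ∑ q ∈ Finset.univ.filter (fun q => actW δ q u = p), v q := rfl
    _ = ∑ q : Q, v q := h
    _ = 0 := hv

/-- The endomorphism of `w⊥` induced by a word. -/
def rhoEnd {Q A : Type*} [Fintype Q] [DecidableEq Q] (δ : Q → A → Q) (u : List A) :
    Module.End ℂ (Wperp Q) :=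
  (piLin δ u).restrict (piLin_mem δ u)

/-- The representation `ρ : Σ* → End(w⊥)`; we record it in the multiplicative opposite so
that `ρ (u ++ v) = ρ u * ρ v` (the paper's right-action convention). -/
def rho {Q A : Type*} [Fintype Q] [DecidableEq Q] (δ : Q → A → Q) (u : List A) :
    (Module.End ℂ (Wperp Q))ᵐᵒᵖ :=
  MulOpposite.op (rhoEnd δ u)

/-- `ℛ`, the ℂ-subalgebra generated by `ρ(Σ*)`. -/
def Ralg {Q A : Type*} [Fintype Q] [DecidableEq Q] (δ : Q → A → Q) :
    Subalgebra ℂ (Module.End ℂ (Wperp Q))ᵐᵒᵖ :=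
  Algebra.adjoin ℂ (Set.range (rho δ))

/-- `ρ(u)` seen as an element of `ℛ`. -/
def rhoR {Q A : Type*} [Fintype Q] [DecidableEq Q] (δ : Q → A → Q) (u : List A) :
    Ralg δ :=
  ⟨rho δ u, Algebra.subset_adjoin (Set.mem_range_self u)⟩

/-- The Jacobson radical `Rad(ℛ)` of `ℛ`, realised as a subset of the ambient algebra via
the standard characterisation: `x ∈ Rad(ℛ)` iff `x ∈ ℛ` and for every `y ∈ ℛ` the element
`1 - y * x` is left-invertible in `ℛ`. -/
def RadSet {Q A : Type*} [Fintype Q] [DecidableEq Q] (δ : Q → A → Q) :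
    Set (Module.End ℂ (Wperp Q))ᵐᵒᵖ :=
  {x | x ∈ Ralg δ ∧ ∀ y ∈ Ralg δ, ∃ z ∈ Ralg δ, z * (1 - y * x) = 1}

/-- `Rad(𝒜)`: the set of radical words, i.e. words `u` with `ρ(u) ∈ Rad(ℛ)`. -/
def RadWords {Q A : Type*} [Fintype Q] [DecidableEq Q] (δ : Q → A → Q) : Set (List A) :=
  {u | rho δ u ∈ RadSet δ}

/-- The automaton is semisimple when `Rad(𝒜) = Syn(𝒜)`. -/
def IsSemisimple {Q A : Type*} [Fintype Q] [DecidableEq Q] (δ : Q → A → Q) : Prop :=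
  RadWords δ = SynWords δ

/-- The `t`-packing number `D(t,r,n)`: the maximum size of a family of `r`-subsets of an
`n`-set in which every `t`-subset is contained in at most one member. -/
def packingNumber (t r n : ℕ) : ℕ :=
  sSup {m | ∃ F : Finset (Finset (Fin n)), F.card = m ∧ (∀ S ∈ F, S.card = r) ∧
    ∀ T : Finset (Fin n), T.card = t → (F.filter fun S => T ⊆ S).card ≤ 1}

/-- The former-rank `Fr(𝒜)`: the least rank of a non-reset word. -/
def formerRank {Q A : Type*} [Fintype Q] [DecidableEq Q] (δ : Q → A → Q) : ℕ :=
  sInf {m | ∃ u : List A, ¬ IsReset δ u ∧ wordRank δ u = m}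

/-- `Fs(𝒜)`: the set of former-synchronizing words. -/
def Fs {Q A : Type*} [Fintype Q] [DecidableEq Q] (δ : Q → A → Q) : Set (List A) :=
  {u | wordRank δ u = formerRank δ}

/-- `θ_i(u)`: the image of `ρ(u)` in the `i`-th Wedderburn–Artin matrix component, where
`e : ℛ → ∏ i, M_{n_i}(ℂ)` is the quotient map `ψ` followed by the fixed isomorphism. -/
def theta {Q A : Type*} [Fintype Q] [DecidableEq Q] (δ : Q → A → Q) {k : ℕ} {nn : Fin k → ℕ}
    (e : Ralg δ →ₐ[ℂ] ∀ i : Fin k, Matrix (Fin (nn i)) (Fin (nn i)) ℂ)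
    (u : List A) (i : Fin k) : Matrix (Fin (nn i)) (Fin (nn i)) ℂ :=
  e (rhoR δ u) i

/-- `supp(v) = {i : θ_i(v) ≠ 0}`. -/
def suppW {Q A : Type*} [Fintype Q] [DecidableEq Q] (δ : Q → A → Q) {k : ℕ} {nn : Fin k → ℕ}
    (e : Ralg δ →ₐ[ℂ] ∀ i : Fin k, Matrix (Fin (nn i)) (Fin (nn i)) ℂ)
    (v : List A) : Set (Fin k) :=
  {i | theta δ e v i ≠ 0}

/-- `u ∈ Σ* v Σ*`, i.e. `v` is a factor of `u`. -/
def InFactor {A : Type*} (v u : List A) : Prop :=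
  ∃ a b : List A, u = a ++ v ++ b

/-- `u` is a `v`-minimal word: `u ∈ Σ*vΣ*`, `supp(u)` is nonempty, and `supp(u)` is minimal
among the nonempty supports of words in `Σ*vΣ*`. -/
def IsVMinimal {Q A : Type*} [Fintype Q] [DecidableEq Q] (δ : Q → A → Q) {k : ℕ}
    {nn : Fin k → ℕ}
    (e : Ralg δ →ₐ[ℂ] ∀ i : Fin k, Matrix (Fin (nn i)) (Fin (nn i)) ℂ)
    (v u : List A) : Prop :=
  InFactor v u ∧ (suppW δ e u).Nonempty ∧
    ∀ z : List A, InFactor v z → suppW δ e z ⊆ suppW δ e u →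
      suppW δ e z = ∅ ∨ suppW δ e z = suppW δ e u

/-- The `i`-th factor monoid `ℳ_i = θ_i(Σ*)`. -/
def factorMonoid {Q A : Type*} [Fintype Q] [DecidableEq Q] (δ : Q → A → Q) {k : ℕ}
    {nn : Fin k → ℕ}
    (e : Ralg δ →ₐ[ℂ] ∀ i : Fin k, Matrix (Fin (nn i)) (Fin (nn i)) ℂ)
    (i : Fin k) : Set (Matrix (Fin (nn i)) (Fin (nn i)) ℂ) :=
  Set.range fun u : List A => theta δ e u i

/-- A two-sided ideal of the (sub)monoid `M`. -/
def IsSetIdeal {X : Type*} [Mul X] (M I : Set X) : Prop :=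
  I ⊆ M ∧ ∀ a ∈ M, ∀ x ∈ I, a * x ∈ I ∧ x * a ∈ I

/-- `I` is a `0`-minimal (two-sided) ideal of the monoid `M`. -/
def IsZeroMinimalIdeal {X : Type*} [Mul X] [Zero X] (M I : Set X) : Prop :=
  IsSetIdeal M I ∧ (0 : X) ∈ I ∧ I ≠ {0} ∧
    ∀ J : Set X, IsSetIdeal M J → (0 : X) ∈ J → J ⊆ I → J ≠ {0} → J = I

/-- `Rnk_i(g) = min {rk(u) : θ_i(u) = g}`. -/
def rnkElt {Q A : Type*} [Fintype Q] [DecidableEq Q] (δ : Q → A → Q) {k : ℕ}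
    {nn : Fin k → ℕ}
    (e : Ralg δ →ₐ[ℂ] ∀ i : Fin k, Matrix (Fin (nn i)) (Fin (nn i)) ℂ)
    (i : Fin k) (g : Matrix (Fin (nn i)) (Fin (nn i)) ℂ) : ℕ :=
  sInf {m | ∃ u : List A, theta δ e u i = g ∧ wordRank δ u = m}

/-- `Rnk(ℐ_i) = min {Rnk_i(g) : g ∈ ℐ_i ∖ {0}}`. -/
def rnkIdeal {Q A : Type*} [Fintype Q] [DecidableEq Q] (δ : Q → A → Q) {k : ℕ}
    {nn : Fin k → ℕ}
    (e : Ralg δ →ₐ[ℂ] ∀ i : Fin k, Matrix (Fin (nn i)) (Fin (nn i)) ℂ)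
    (i : Fin k) (I : Set (Matrix (Fin (nn i)) (Fin (nn i)) ℂ)) : ℕ :=
  sInf {m | ∃ g ∈ I, g ≠ 0 ∧ rnkElt δ e i g = m}

/-- `w` `u`-represents `g`: `w ∈ Σ*uΣ*`, `θ_i(w) = g`, and either `g = 0` or `rk(w)` is
minimum among all words with the first two properties. -/
def URepresents {Q A : Type*} [Fintype Q] [DecidableEq Q] (δ : Q → A → Q) {k : ℕ}
    {nn : Fin k → ℕ}
    (e : Ralg δ →ₐ[ℂ] ∀ i : Fin k, Matrix (Fin (nn i)) (Fin (nn i)) ℂ)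
    (u : List A) (i : Fin k) (w : List A) (g : Matrix (Fin (nn i)) (Fin (nn i)) ℂ) : Prop :=
  InFactor u w ∧ theta δ e w i = g ∧
    (g = 0 ∨ ∀ w' : List A, InFactor u w' → theta δ e w' i = g → wordRank δ w ≤ wordRank δ w')

/-- The relation `σ_i` on `ℐ_i`. -/
def sigmaRel {Q A : Type*} [Fintype Q] [DecidableEq Q] (δ : Q → A → Q) {k : ℕ}
    {nn : Fin k → ℕ}
    (e : Ralg δ →ₐ[ℂ] ∀ i : Fin k, Matrix (Fin (nn i)) (Fin (nn i)) ℂ)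
    (i : Fin k) (u : List A)
    (g f : Matrix (Fin (nn i)) (Fin (nn i)) ℂ) : Prop :=
  g = f ∨ ∃ w₁ w₂ : List A, URepresents δ e u i w₁ g ∧ URepresents δ e u i w₂ f ∧
    1 < (imageSet δ w₁ ∩ imageSet δ w₂).card

/-- `T ⊆ [1,k]` is a core. -/
def IsCore {Q A : Type*} [Fintype Q] [DecidableEq Q] (δ : Q → A → Q) {k : ℕ}
    {nn : Fin k → ℕ}
    (e : Ralg δ →ₐ[ℂ] ∀ i : Fin k, Matrix (Fin (nn i)) (Fin (nn i)) ℂ)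
    (T : Set (Fin k)) : Prop :=
  ∀ x : List A, (∀ i ∈ T, theta δ e x i = 0) → ∀ i : Fin k, theta δ e x i = 0

/-- A minimal core. -/
def IsMinimalCore {Q A : Type*} [Fintype Q] [DecidableEq Q] (δ : Q → A → Q) {k : ℕ}
    {nn : Fin k → ℕ}
    (e : Ralg δ →ₐ[ℂ] ∀ i : Fin k, Matrix (Fin (nn i)) (Fin (nn i)) ℂ)
    (T : Set (Fin k)) : Prop :=
  IsCore δ e T ∧ ∀ T' : Set (Fin k), T' ⊆ T → IsCore δ e T' → T' = T

/-- An automaton congruence. -/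
def IsCongruence {Q A : Type*} (δ : Q → A → Q) (σ : Q → Q → Prop) : Prop :=
  Equivalence σ ∧ ∀ q p : Q, σ q p → ∀ u : List A, σ (actW δ q u) (actW δ p u)

/-- A simple automaton: the only congruences are the identity and the universal relation. -/
def IsSimple {Q A : Type*} (δ : Q → A → Q) : Prop :=
  ∀ σ : Q → Q → Prop, IsCongruence δ σ → σ = Eq ∨ σ = fun _ _ => True


/-!
Let `z` be a word of least rank such that `θ_i(z)` is a nonzero element of `ℐ_i`, so that
`rk(z) = Rnk(ℐ_i)`. The matrices `θ_i(xzy)` with `x ∈ Σ*uΣ*` form an ideal of `ℳ_i` inside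
`ℐ_i`. It contains `0` (take `y` a reset word) and a nonzero element: `M_{n_i}(ℂ)` is a simple
ring and is spanned by `ℳ_i` because `ψ` is onto, so `θ_i(w) θ_i(s) θ_i(z) ≠ 0` for some word
`s`. By `0`-minimality this ideal is `ℐ_i`, hence `g = θ_i(xzy)` with `xzy ∈ Σ*uΣ*`, and the
minimality of `rk(w)` gives `rk(w) ≤ rk(xzy) ≤ rk(z) = Rnk(ℐ_i) ≤ Rnk_i(g) ≤ rk(w)`.
-/

theorem IsSimpleRing.exists_mul_mul_ne_zero {R : Type*} [Ring R] [IsSimpleRing R] {a b : R}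
    (ha : a ≠ 0) (hb : b ≠ 0) : ∃ c, a * c * b ≠ 0 := by
  by_contra! h
  let I := TwoSidedIdeal.mk' {x : R | ∀ c, x * c * b = 0} (by simp)
    (fun hx hy c => by simp [add_mul, hx c, hy c]) (fun hx c => by simp [hx c])
    (fun {x y} hy c => by rw [mul_assoc x, mul_assoc x, hy, mul_zero])
    (fun {x y} hx c => by rw [mul_assoc x, hx])
  have h1 : (1 : R) ∈ I := IsSimpleRing.one_mem_of_ne_zero_mem I ha (by simpa [I] using h)
  rw [TwoSidedIdeal.mem_mk'] at h1
  exact hb (by simpa using h1 1)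

section Words

variable {Q A : Type*} (δ : Q → A → Q)

theorem actW_append (q : Q) (x y : List A) :
    actW δ q (x ++ y) = actW δ (actW δ q x) y :=
  List.foldl_append

theorem InFactor.append_left {v x : List A} (h : InFactor v x) (s : List A) :
    InFactor v (s ++ x) := by
  obtain ⟨a, b, rfl⟩ := h
  exact ⟨s ++ a, b, by simp⟩

theorem InFactor.append_right {v x : List A} (h : InFactor v x) (s : List A) :
    InFactor v (x ++ s) := by
  obtain ⟨a, b, rfl⟩ := h
  exact ⟨a, b ++ s, by simp⟩

variable [Fintype Q] [DecidableEq Q]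

theorem imageSet_append (x y : List A) :
    imageSet δ (x ++ y) = (imageSet δ x).image (actW δ · y) := by
  simp only [imageSet, Finset.image_image, Function.comp_def, actW_append]

theorem wordRank_append_le_left (x y : List A) : wordRank δ (x ++ y) ≤ wordRank δ x := by
  rw [wordRank, imageSet_append]
  exact Finset.card_image_le

theorem wordRank_append_le_right (x y : List A) : wordRank δ (x ++ y) ≤ wordRank δ y := by
  refine Finset.card_le_card fun p hp => ?_
  obtain ⟨q, -, rfl⟩ := Finset.mem_image.mp hp
  exact Finset.mem_image.mpr ⟨actW δ q x, Finset.mem_univ _, (actW_append δ q x y).symm⟩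

theorem piLin_apply (u : List A) (v : Q → ℂ) (p : Q) :
    piLin δ u v p = ∑ q, if actW δ q u = p then v q else 0 :=
  Finset.sum_filter _ _

theorem piLin_append (x y : List A) : piLin δ (x ++ y) = piLin δ y ∘ₗ piLin δ x := by
  refine LinearMap.ext fun v => funext fun p => ?_
  simp only [LinearMap.comp_apply, piLin_apply, actW_append, Finset.ite_sum_zero]
  rw [Finset.sum_comm]
  refine Finset.sum_congr rfl fun q _ => ?_
  rw [Finset.sum_eq_single (actW δ q x) (fun q' _ hq' => by simp [Ne.symm hq']) (by simp)]
  simp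

theorem rho_append (x y : List A) : rho δ (x ++ y) = rho δ x * rho δ y := by
  refine MulOpposite.unop_injective (LinearMap.ext fun v => Subtype.ext ?_)
  exact LinearMap.congr_fun (piLin_append δ x y) v

theorem rho_nil : rho δ ([] : List A) = 1 := by
  refine MulOpposite.unop_injective (LinearMap.ext fun v => Subtype.ext (funext fun p => ?_))
  show piLin δ [] v p = (v : Q → ℂ) p
  rw [piLin_apply]
  exact (Fintype.sum_ite_eq' p _)

theorem rho_eq_zero_of_isReset {r : List A} (hr : IsReset δ r) : rho δ r = 0 := by
  obtain ⟨q₀, hq₀⟩ := Finset.card_eq_one.mp hr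
  have hconst : ∀ q, actW δ q r = q₀ := fun q =>
    Finset.mem_singleton.mp (hq₀ ▸ Finset.mem_image_of_mem _ (Finset.mem_univ q))
  refine MulOpposite.unop_injective (LinearMap.ext fun v => Subtype.ext (funext fun p => ?_))
  show piLin δ r v p = 0
  simp only [piLin_apply, hconst, Finset.sum_ite_irrel, Finset.sum_const_zero]
  split_ifs
  exacts [(mem_Wperp _).mp v.2, rfl]

theorem closure_range_rho :
    (Submonoid.closure (Set.range (rho δ)) : Set (Module.End ℂ (Wperp Q))ᵐᵒᵖ) =
      Set.range (rho δ) :=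
  congrArg SetLike.coe <| Submonoid.closure_eq
    { carrier := Set.range (rho δ)
      one_mem' := ⟨[], rho_nil δ⟩
      mul_mem' := by
        rintro _ _ ⟨x, rfl⟩ ⟨y, rfl⟩
        exact ⟨x ++ y, rho_append δ x y⟩ }

theorem span_range_rhoR : Submodule.span ℂ (Set.range (rhoR δ)) = ⊤ := by
  refine eq_top_iff.mpr fun x _ => ?_
  have hx : (x : (Module.End ℂ (Wperp Q))ᵐᵒᵖ) ∈ Submodule.span ℂ (Set.range (rho δ)) := by
    have : (x : (Module.End ℂ (Wperp Q))ᵐᵒᵖ) ∈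
        Subalgebra.toSubmodule (Algebra.adjoin ℂ (Set.range (rho δ))) := x.2
    rwa [Algebra.adjoin_eq_span, closure_range_rho] at this
  rw [show Set.range (rho δ) = (Ralg δ).val.toLinearMap '' Set.range (rhoR δ) from
    Set.range_comp (Ralg δ).val.toLinearMap (rhoR δ), ← Submodule.map_span] at hx
  obtain ⟨b, hb, hbx⟩ := hx
  rwa [Subtype.ext hbx] at hb

end Words

section Theta

variable {Q A : Type*} [Fintype Q] [DecidableEq Q] {δ : Q → A → Q} {k : ℕ} {nn : Fin k → ℕ}
  (e : Ralg δ →ₐ[ℂ] ∀ i : Fin k, Matrix (Fin (nn i)) (Fin (nn i)) ℂ) {i : Fin k}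

theorem theta_append (x y : List A) :
    theta δ e (x ++ y) i = theta δ e x i * theta δ e y i := by
  simp only [theta, show rhoR δ (x ++ y) = rhoR δ x * rhoR δ y from
    Subtype.ext (rho_append δ x y), map_mul, Pi.mul_apply]

theorem theta_eq_zero_of_isReset {r : List A} (hr : IsReset δ r) : theta δ e r i = 0 := by
  simp only [theta, show rhoR δ r = 0 from Subtype.ext (rho_eq_zero_of_isReset δ hr), map_zero,
    Pi.zero_apply]

theorem span_factorMonoid (he : Function.Surjective e) :
    Submodule.span ℂ (factorMonoid δ e i) = ⊤ := by
  let L := (LinearMap.proj i : (∀ j, Matrix (Fin (nn j)) (Fin (nn j)) ℂ) →ₗ[ℂ] _) ∘ₗ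
    e.toLinearMap
  have hL : Function.Surjective L := (LinearMap.proj_surjective (R := ℂ) i).comp he
  rw [factorMonoid, show Set.range (fun u : List A => theta δ e u i) = L '' Set.range (rhoR δ) from
    Set.range_comp L (rhoR δ), ← Submodule.map_span, span_range_rhoR, Submodule.map_top,
    LinearMap.range_eq_top.mpr hL]

theorem exists_mul_theta_mul_ne_zero (he : Function.Surjective e)
    {a b : Matrix (Fin (nn i)) (Fin (nn i)) ℂ} (ha : a ≠ 0) (hb : b ≠ 0) :
    ∃ s : List A, a * theta δ e s i * b ≠ 0 := by
  obtain ⟨p, -, -⟩ : ∃ p q, a p q ≠ 0 := by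
    by_contra! h
    exact ha (Matrix.ext h)
  have : Nonempty (Fin (nn i)) := ⟨p⟩
  obtain ⟨c, hc⟩ := IsSimpleRing.exists_mul_mul_ne_zero ha hb
  by_contra! h
  let f := LinearMap.mulLeft ℂ a ∘ₗ LinearMap.mulRight ℂ b
  have hker : Submodule.span ℂ (factorMonoid δ e i) ≤ LinearMap.ker f := by
    refine Submodule.span_le.mpr ?_
    rintro _ ⟨s, rfl⟩
    simp [f, ← mul_assoc, h s]
  rw [span_factorMonoid e he] at hker
  exact hc (by simpa [f, mul_assoc] using hker (Submodule.mem_top (x := c)))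

theorem theta_append_append (x z y : List A) :
    theta δ e (x ++ z ++ y) i = theta δ e x i * theta δ e z i * theta δ e y i := by
  rw [theta_append, theta_append]

variable (δ i) in
def idealThrough (u z : List A) : Set (Matrix (Fin (nn i)) (Fin (nn i)) ℂ) :=
  {m | ∃ x y, InFactor u x ∧ theta δ e (x ++ z ++ y) i = m}

variable {u z : List A}

theorem isSetIdeal_idealThrough : IsSetIdeal (factorMonoid δ e i) (idealThrough δ e i u z) := by
  refine ⟨fun _ ⟨x, y, _, hm⟩ => ⟨x ++ z ++ y, hm⟩, ?_⟩
  rintro _ ⟨s, rfl⟩ _ ⟨x, y, hx, rfl⟩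
  refine ⟨⟨s ++ x, y, hx.append_left s, ?_⟩, ⟨x, y ++ s, hx, ?_⟩⟩ <;>
    simp only [theta_append, mul_assoc]

theorem zero_mem_idealThrough (hsync : IsSynchronizing δ) : 0 ∈ idealThrough δ e i u z := by
  obtain ⟨r, hr⟩ := hsync
  exact ⟨u, r, ⟨[], [], by simp⟩, by rw [theta_append_append, theta_eq_zero_of_isReset e hr,
    mul_zero]⟩

theorem idealThrough_subset {I : Set (Matrix (Fin (nn i)) (Fin (nn i)) ℂ)}
    (hI : IsSetIdeal (factorMonoid δ e i) I) (hz : theta δ e z i ∈ I) :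
    idealThrough δ e i u z ⊆ I := by
  rintro _ ⟨x, y, -, rfl⟩
  rw [theta_append_append]
  exact (hI.2 _ ⟨y, rfl⟩ _ (hI.2 _ ⟨x, rfl⟩ _ hz).1).2

theorem idealThrough_ne_singleton_zero (he : Function.Surjective e) {w : List A}
    (hw : InFactor u w) (hw0 : theta δ e w i ≠ 0) (hz0 : theta δ e z i ≠ 0) :
    idealThrough δ e i u z ≠ {0} := by
  obtain ⟨s, hs⟩ := exists_mul_theta_mul_ne_zero e he hw0 hz0
  intro h
  have hmem : theta δ e (w ++ s ++ z ++ []) i ∈ idealThrough δ e i u z :=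
    ⟨w ++ s, [], hw.append_right s, rfl⟩
  rw [h, Set.mem_singleton_iff, List.append_nil, theta_append, theta_append] at hmem
  exact hs hmem

theorem idealThrough_eq_of_isZeroMinimalIdeal (he : Function.Surjective e)
    (hsync : IsSynchronizing δ) {I : Set (Matrix (Fin (nn i)) (Fin (nn i)) ℂ)}
    (hI : IsZeroMinimalIdeal (factorMonoid δ e i) I) (hz : theta δ e z i ∈ I)
    (hz0 : theta δ e z i ≠ 0) {w : List A} (hw : InFactor u w) (hw0 : theta δ e w i ≠ 0) :
    idealThrough δ e i u z = I :=
  hI.2.2.2 _ (isSetIdeal_idealThrough e) (zero_mem_idealThrough e hsync)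
    (idealThrough_subset e hI.1 hz) (idealThrough_ne_singleton_zero e he hw hw0 hz0)

theorem rnkIdeal_le_wordRank {I : Set (Matrix (Fin (nn i)) (Fin (nn i)) ℂ)} {w : List A}
    (hw : theta δ e w i ∈ I) (hw0 : theta δ e w i ≠ 0) : rnkIdeal δ e i I ≤ wordRank δ w :=
  le_trans (b := rnkElt δ e i (theta δ e w i)) (Nat.sInf_le ⟨_, hw, hw0, rfl⟩)
    (Nat.sInf_le ⟨w, rfl, rfl⟩)

theorem exists_wordRank_eq_rnkIdeal {I : Set (Matrix (Fin (nn i)) (Fin (nn i)) ℂ)}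
    (hI : I ⊆ factorMonoid δ e i) {g : Matrix (Fin (nn i)) (Fin (nn i)) ℂ} (hg : g ∈ I)
    (hg0 : g ≠ 0) :
    ∃ z, theta δ e z i ∈ I ∧ theta δ e z i ≠ 0 ∧ wordRank δ z = rnkIdeal δ e i I := by
  obtain ⟨h, hhI, hh0, hrnk⟩ := Nat.sInf_mem (⟨_, g, hg, hg0, rfl⟩ :
    {m | ∃ g ∈ I, g ≠ 0 ∧ rnkElt δ e i g = m}.Nonempty)
  obtain ⟨z₀, hz₀⟩ := hI hhI
  obtain ⟨z, rfl, hz⟩ := Nat.sInf_mem (⟨_, z₀, hz₀, rfl⟩ :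
    {m | ∃ z : List A, theta δ e z i = h ∧ wordRank δ z = m}.Nonempty)
  exact ⟨z, hhI, hh0, hz.trans hrnk⟩

end Theta

theorem stmt13_general {Q A : Type*} [Fintype Q] [DecidableEq Q] (δ : Q → A → Q)
    {k : ℕ} {nn : Fin k → ℕ}
    (e : Ralg δ →ₐ[ℂ] ∀ i : Fin k, Matrix (Fin (nn i)) (Fin (nn i)) ℂ)
    (he_surj : Function.Surjective e)
    (Ii : ∀ i : Fin k, Set (Matrix (Fin (nn i)) (Fin (nn i)) ℂ))
    (hIi : ∀ i : Fin k, IsZeroMinimalIdeal (factorMonoid δ e i) (Ii i))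
    (hsync : IsSynchronizing δ)
    (u : List A) (i : Fin k)
    (g : Matrix (Fin (nn i)) (Fin (nn i)) ℂ) (hg : g ∈ Ii i) (hg0 : g ≠ 0)
    (w : List A) (hw : URepresents δ e u i w g) :
    wordRank δ w = rnkIdeal δ e i (Ii i) := by
  obtain ⟨hwu, rfl, hwmin⟩ := hw
  obtain ⟨z, hzI, hz0, hzrank⟩ := exists_wordRank_eq_rnkIdeal e (hIi i).1.1 hg hg0
  obtain ⟨x, y, hx, hxy⟩ : theta δ e w i ∈ idealThrough δ e i u z := by
    rwa [idealThrough_eq_of_isZeroMinimalIdeal e he_surj hsync (hIi i) hzI hz0 hwu hg0]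
  refine le_antisymm ?_ (rnkIdeal_le_wordRank e hg hg0)
  calc wordRank δ w
      ≤ wordRank δ (x ++ z ++ y) :=
        hwmin.resolve_left hg0 _ ((hx.append_right z).append_right y) hxy
    _ ≤ wordRank δ z := (wordRank_append_le_left δ _ y).trans (wordRank_append_le_right δ x z)
    _ = rnkIdeal δ e i (Ii i) := hzrank

theorem stmt13 {Q A : Type*} [Fintype Q] [DecidableEq Q] (δ : Q → A → Q)
    {k : ℕ} {nn : Fin k → ℕ}
    (e : Ralg δ →ₐ[ℂ] ∀ i : Fin k, Matrix (Fin (nn i)) (Fin (nn i)) ℂ)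
    (he_surj : Function.Surjective e)
    (he_ker : ∀ x : Ralg δ, e x = 0 ↔ (x : (Module.End ℂ (Wperp Q))ᵐᵒᵖ) ∈ RadSet δ)
    (Ii : ∀ i : Fin k, Set (Matrix (Fin (nn i)) (Fin (nn i)) ℂ))
    (hIi : ∀ i : Fin k, IsZeroMinimalIdeal (factorMonoid δ e i) (Ii i))
    (hIuniq : ∀ (i : Fin k) (J : Set (Matrix (Fin (nn i)) (Fin (nn i)) ℂ)),
      IsZeroMinimalIdeal (factorMonoid δ e i) J → J = Ii i)
    (hsync : IsSynchronizing δ)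
    (v u : List A) (hu : IsVMinimal δ e v u) (i : Fin k) (hi : i ∈ suppW δ e u)
    (g : Matrix (Fin (nn i)) (Fin (nn i)) ℂ) (hg : g ∈ Ii i) (hg0 : g ≠ 0)
    (w : List A) (hw : URepresents δ e u i w g) :
    wordRank δ w = rnkIdeal δ e i (Ii i) :=
  stmt13_general δ e he_surj Ii hIi hsync u i g hg hg0 w hw
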